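/- Let V and W be finite-dimensional normed real vector spaces, let φ : W →ₗ[ℝ] V be a linear map, and let C ⊆ V and C' ⊆ W be closed subsets, each stable under multiplication by every nonzero real scalar and containing 0. Assume the transversality condition: for all v ∈ C and w ∈ C', if v + φ(w) = 0 then v = 0 and w = 0. Then there exists a constant c > 0 such that ‖v + φ(w)‖ ≥ c · (‖v‖ + ‖w‖) for all v ∈ C and all w ∈ C'. -/

import Mathlib

/-! A linear map that does not vanish on the closed cone `K ∖ {0}` has norm bounded below by a
positive constant on the compact set `K ∩ sphere 0 1`, and homogeneity spreads this bound over
all of `K`. Applied to `(v, w) ↦ v + φ w` on `C ×ˢ C'`, transversality is exactly the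
non-vanishing hypothesis. -/

open Metric

theorem LinearMap.exists_pos_mul_norm_le_of_ker_inter_cone
    {E F : Type*} [NormedAddCommGroup E] [NormedSpace ℝ E] [FiniteDimensional ℝ E]
    [NormedAddCommGroup F] [NormedSpace ℝ F]
    (L : E →ₗ[ℝ] F) {K : Set E} (hK : IsClosed K) (hKcone : ∀ t : ℝ, 0 < t → ∀ x ∈ K, t • x ∈ K)
    (hker : ∀ x ∈ K, L x = 0 → x = 0) :
    ∃ c : ℝ, 0 < c ∧ ∀ x ∈ K, c * ‖x‖ ≤ ‖L x‖ := by
  have hpos : ∀ x ∈ K ∩ sphere 0 1, 0 < ‖L x‖ := by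
    rintro x ⟨hxK, hx⟩
    refine norm_pos_iff.mpr fun hLx => ?_
    simp [hker x hxK hLx] at hx
  obtain ⟨c, hc, hcle⟩ := ((isCompact_sphere 0 1).inter_left hK).exists_forall_le'
    (L.continuous_of_finiteDimensional.norm.continuousOn) hpos
  refine ⟨c, hc, fun x hx => ?_⟩
  rcases eq_or_ne x 0 with rfl | hx0
  · simp
  have hnx : 0 < ‖x‖ := norm_pos_iff.mpr hx0
  have hunit : ‖x‖⁻¹ • x ∈ K ∩ sphere 0 1 :=
    ⟨hKcone _ (inv_pos.mpr hnx) x hx, by simp [norm_smul, hnx.ne']⟩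
  have := hcle _ hunit
  rw [map_smul, norm_smul, norm_inv, norm_norm, inv_mul_eq_div, le_div_iff₀ hnx] at this
  linarith

theorem coercivity_of_transversal_general
    {V W : Type*}
    [NormedAddCommGroup V] [NormedSpace ℝ V] [FiniteDimensional ℝ V]
    [NormedAddCommGroup W] [NormedSpace ℝ W] [FiniteDimensional ℝ W]
    (φ : W →ₗ[ℝ] V) (C : Set V) (C' : Set W)
    (hCclosed : IsClosed C) (hC'closed : IsClosed C')
    (hCcone : ∀ c : ℝ, c ≠ 0 → ∀ v ∈ C, c • v ∈ C)
    (hC'cone : ∀ c : ℝ, c ≠ 0 → ∀ w ∈ C', c • w ∈ C')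
    (htrans : ∀ v ∈ C, ∀ w ∈ C', v + φ w = 0 → v = 0 ∧ w = 0) :
    ∃ c : ℝ, 0 < c ∧ ∀ v ∈ C, ∀ w ∈ C', ‖v + φ w‖ ≥ c * (‖v‖ + ‖w‖) := by
  obtain ⟨c, hc, hcle⟩ := (LinearMap.id.coprod φ).exists_pos_mul_norm_le_of_ker_inter_cone
    (hCclosed.prod hC'closed)
    (fun t ht x hx => ⟨hCcone t ht.ne' _ hx.1, hC'cone t ht.ne' _ hx.2⟩)
    (fun x hx hLx => Prod.ext_iff.mpr (htrans _ hx.1 _ hx.2 hLx))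
  refine ⟨c / 2, half_pos hc, fun v hv w hw => ?_⟩
  have hsum : ‖v‖ + ‖w‖ ≤ 2 * ‖(v, w)‖ := by
    linarith [norm_fst_le (v, w), norm_snd_le (v, w)]
  calc c / 2 * (‖v‖ + ‖w‖) ≤ c / 2 * (2 * ‖(v, w)‖) := by gcongr
    _ = c * ‖(v, w)‖ := by ring
    _ ≤ ‖v + φ w‖ := hcle (v, w) ⟨hv, hw⟩

/-- Quantitative coercivity behind Lemma 2.8: under the fiberwise
transversality condition, `‖v + φ w‖` is bounded below by a positive multiple
of `‖v‖ + ‖w‖` on the cones. -/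
theorem coercivity_of_transversal
    {V W : Type*}
    [NormedAddCommGroup V] [NormedSpace ℝ V] [FiniteDimensional ℝ V]
    [NormedAddCommGroup W] [NormedSpace ℝ W] [FiniteDimensional ℝ W]
    (φ : W →ₗ[ℝ] V) (C : Set V) (C' : Set W)
    (hCclosed : IsClosed C) (hC'closed : IsClosed C')
    (hCcone : ∀ c : ℝ, c ≠ 0 → ∀ v ∈ C, c • v ∈ C)
    (hC'cone : ∀ c : ℝ, c ≠ 0 → ∀ w ∈ C', c • w ∈ C')
    (h0 : (0 : V) ∈ C) (h0' : (0 : W) ∈ C')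
    (htrans : ∀ v ∈ C, ∀ w ∈ C', v + φ w = 0 → v = 0 ∧ w = 0) :
    ∃ c : ℝ, 0 < c ∧ ∀ v ∈ C, ∀ w ∈ C', ‖v + φ w‖ ≥ c * (‖v‖ + ‖w‖) :=
  coercivity_of_transversal_general φ C C' hCclosed hC'closed hCcone hC'cone htrans
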